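/- arXiv:1004.1317 — 2 statements merged into one kernel-verified Lean document; each statement's English description precedes it below -/
import Mathlib

section
/- For every k ∈ ℕ, every real β > −1 and every real z with |z| < 1, the series ∑_{l=0}^∞ I_{k l}^{(β)} · z^l converges (HasSum) to Real.Gamma (β + 1) · ∑_{t=0}^{k} (−1)^t · (k choose t) · (∏_{j=0}^{t−1} (β + 1 + j)) / t! · (1 − z)^{t + β}. -/
open scoped BigOperators

/-- The Laguerre polynomial `L_n`. -/
noncomputable def laguerre (n : ℕ) (x : ℝ) : ℝ :=
  ∑ k ∈ Finset.range (n + 1), (-1) ^ k * (n.choose k : ℝ) * x ^ k / (k.factorial : ℝ)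

/-- `I_{kl}^{(β)} = ∫₀^∞ e^{-q} q^β L_k(q) L_l(q) dq`. -/
noncomputable def Ikl (k l : ℕ) (β : ℝ) : ℝ :=
  ∫ q in Set.Ioi (0 : ℝ), Real.exp (-q) * q ^ β * laguerre k q * laguerre l q

/-! Expanding both Laguerre polynomials and integrating term by term against `e^{-q} q^β` gives
`I_{kl} = ∑_t (-1)^t (k choose t)/t! ∑_m (-1)^m (l choose m)/m! Γ(γ + m)` with `γ = β + 1 + t`.
Since `Γ(γ + m) = Γ(γ) (γ)_m` and `(-1)^m (γ)_m / m! = (-γ choose m)`, Chu–Vandermonde turns the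
inner sum into `Γ(γ) (l - γ choose l)`, and `∑_l (l - γ choose l) z^l = (1 - z)^(γ - 1)` is the
binomial series. -/

open Finset
open scoped Nat

lemma ascPochhammer_eval_eq_prod_range {R : Type*} [CommSemiring R] (n : ℕ) (r : R) :
    (ascPochhammer R n).eval r = ∏ j ∈ range n, (r + j) := by
  induction n with
  | zero => simp
  | succ n ih => rw [ascPochhammer_succ_eval, ih, prod_range_succ]

section BinomialRing
variable {K : Type*} [Field K] [CharZero K]

lemma Ring.choose_add_sub_one_eq_prod_div (a : K) (n : ℕ) :
    Ring.choose (a + n - 1) n = (∏ j ∈ range n, (a + j)) / n ! := by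
  have h := Ring.factorial_nsmul_multichoose_eq_ascPochhammer a n
  rw [Polynomial.ascPochhammer_smeval_eq_eval, ascPochhammer_eval_eq_prod_range, nsmul_eq_mul,
    Ring.multichoose_eq] at h
  rw [← h, mul_div_cancel_left₀ _ (Nat.cast_ne_zero.mpr n.factorial_ne_zero)]

lemma Ring.choose_neg_eq_prod_div (γ : K) (n : ℕ) :
    Ring.choose (-γ) n = (-1) ^ n * (∏ j ∈ range n, (γ + j)) / n ! := by
  rw [Ring.choose_neg, Ring.choose_add_sub_one_eq_prod_div, Units.smul_def, zsmul_eq_mul,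
    Int.cast_negOnePow_natCast, mul_div_assoc]

end BinomialRing

lemma Ring.choose_natCast_add_eq_sum {R : Type*} [Ring R] [BinomialRing R] (l : ℕ) (r : R) :
    Ring.choose ((l : R) + r) l = ∑ m ∈ range (l + 1), (l.choose m : R) * Ring.choose r m := by
  rw [Ring.add_choose_eq l (Nat.cast_commute l r), ← Nat.sum_antidiagonal_swap]
  simp only [Prod.fst_swap, Prod.snd_swap]
  rw [Nat.sum_antidiagonal_eq_sum_range_succ fun j i => Ring.choose (l : R) i * Ring.choose r j]
  refine sum_congr rfl fun m hm => ?_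
  rw [Ring.choose_natCast, Nat.choose_symm (Nat.lt_succ_iff.mp (mem_range.mp hm))]

lemma hasSum_choose_add_sub_one_mul_pow (a : ℝ) {z : ℝ} (hz : |z| < 1) :
    HasSum (fun n : ℕ => Ring.choose (a + n - 1) n * z ^ n) ((1 - z) ^ (-a)) := by
  have h := (Real.one_div_one_sub_rpow_hasFPowerSeriesOnBall_zero a).hasSum
    (y := z) (by simpa [enorm_eq_nnnorm, ← NNReal.coe_lt_coe] using hz)
  simp only [FormalMultilinearSeries.ofScalars_apply_eq, smul_eq_mul, zero_add] at h
  rwa [one_div, ← Real.rpow_neg (by linarith [(abs_lt.mp hz).2])] at h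

open Real MeasureTheory Set

lemma Real.Gamma_add_nat_eq_mul_prod {x : ℝ} (n : ℕ) (hx : ∀ j < n, x + j ≠ 0) :
    Gamma (x + n) = Gamma x * ∏ j ∈ range n, (x + j) := by
  induction n with
  | zero => simp
  | succ n ih =>
    rw [Nat.cast_succ, ← add_assoc, Gamma_add_one (hx n n.lt_succ_self),
      ih fun j hj => hx j (hj.trans n.lt_succ_self), prod_range_succ]
    ring

lemma exp_neg_mul_rpow_mul_pow_eqOn (β : ℝ) (n : ℕ) :
    EqOn (fun q => exp (-q) * q ^ β * q ^ n) (fun q => exp (-q) * q ^ (β + 1 + n - 1))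
      (Ioi 0) := by
  intro q hq
  simp only
  rw [add_sub_right_comm, add_sub_cancel_right, rpow_add_natCast (ne_of_gt hq), mul_assoc]

lemma integrableOn_exp_neg_mul_rpow_mul_pow {β : ℝ} (hβ : -1 < β) (n : ℕ) :
    IntegrableOn (fun q => exp (-q) * q ^ β * q ^ n) (Ioi 0) :=
  (GammaIntegral_convergent (by linarith [n.cast_nonneg (α := ℝ)])).congr_fun
    (exp_neg_mul_rpow_mul_pow_eqOn β n).symm measurableSet_Ioi

lemma integral_exp_neg_mul_rpow_mul_pow {β : ℝ} (hβ : -1 < β) (n : ℕ) :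
    ∫ q in Ioi 0, exp (-q) * q ^ β * q ^ n = Gamma (β + 1 + n) := by
  rw [setIntegral_congr_fun measurableSet_Ioi (exp_neg_mul_rpow_mul_pow_eqOn β n),
    Gamma_eq_integral (by linarith [n.cast_nonneg (α := ℝ)])]

lemma Ikl_eq_sum_Gamma (k l : ℕ) {β : ℝ} (hβ : -1 < β) :
    Ikl k l β = ∑ t ∈ range (k + 1), (-1) ^ t * (k.choose t : ℝ) / t ! *
      ∑ m ∈ range (l + 1), (-1) ^ m * (l.choose m : ℝ) / m ! * Gamma (β + 1 + t + m) := by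
  have hexpand : ∀ q : ℝ, exp (-q) * q ^ β * laguerre k q * laguerre l q =
      ∑ t ∈ range (k + 1), ∑ m ∈ range (l + 1), (-1) ^ t * (k.choose t : ℝ) / t ! *
        ((-1) ^ m * (l.choose m : ℝ) / m !) * (exp (-q) * q ^ β * q ^ (t + m)) := by
    intro q
    rw [laguerre, laguerre, mul_assoc, sum_mul_sum, mul_sum]
    refine sum_congr rfl fun t _ => ?_
    rw [mul_sum]
    refine sum_congr rfl fun m _ => ?_
    ring
  simp only [Ikl, hexpand]
  rw [integral_finsetSum _ fun t _ => integrable_finsetSum _ fun m _ =>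
    (integrableOn_exp_neg_mul_rpow_mul_pow hβ _).const_mul _]
  refine sum_congr rfl fun t _ => ?_
  rw [integral_finsetSum _ fun m _ => (integrableOn_exp_neg_mul_rpow_mul_pow hβ _).const_mul _,
    mul_sum]
  refine sum_congr rfl fun m _ => ?_
  rw [integral_const_mul, integral_exp_neg_mul_rpow_mul_pow hβ, Nat.cast_add, ← add_assoc,
    mul_assoc]

lemma sum_choose_mul_Gamma_add {γ : ℝ} (hγ : 0 < γ) (l : ℕ) :
    ∑ m ∈ range (l + 1), (-1) ^ m * (l.choose m : ℝ) / m ! * Gamma (γ + m) =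
      Gamma γ * Ring.choose (l - γ) l := by
  rw [sub_eq_add_neg, Ring.choose_natCast_add_eq_sum, mul_sum]
  refine sum_congr rfl fun m _ => ?_
  rw [Ring.choose_neg_eq_prod_div, Gamma_add_nat_eq_mul_prod m fun j _ => by positivity]
  ring

theorem Ikl_generating_function (k : ℕ) (β z : ℝ) (hβ : -1 < β) (hz : |z| < 1) :
    HasSum (fun l : ℕ => Ikl k l β * z ^ l)
      (Real.Gamma (β + 1) *
        ∑ t ∈ Finset.range (k + 1),
          (-1) ^ t * (k.choose t : ℝ) * (∏ j ∈ Finset.range t, (β + 1 + j)) /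
            (t.factorial : ℝ) * (1 - z) ^ ((t : ℝ) + β)) := by
  have hγ (t : ℕ) : 0 < β + 1 + t := by linarith [t.cast_nonneg (α := ℝ)]
  have hcoeff (l : ℕ) : Ikl k l β * z ^ l = ∑ t ∈ range (k + 1),
      Gamma (β + 1) * ((-1) ^ t * (k.choose t : ℝ) * (∏ j ∈ range t, (β + 1 + j)) / t !) *
        (Ring.choose (-(t + β) + l - 1) l * z ^ l) := by
    simp only [Ikl_eq_sum_Gamma k l hβ, sum_choose_mul_Gamma_add (hγ _), sum_mul]
    refine sum_congr rfl fun t _ => ?_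
    rw [Gamma_add_nat_eq_mul_prod t fun j _ => (hγ j).ne',
      show (l : ℝ) - (β + 1 + t) = -(t + β) + l - 1 by ring]
    ring
  have hsum := hasSum_sum (s := range (k + 1)) fun (t : ℕ) _ =>
    (hasSum_choose_add_sub_one_mul_pow (-(t + β)) hz).mul_left
      (Gamma (β + 1) * ((-1) ^ t * (k.choose t : ℝ) * (∏ j ∈ range t, (β + 1 + j)) / t !))
  simp only [← hcoeff] at hsum
  simpa only [neg_neg, mul_assoc, ← mul_sum] using hsum
end

section
/- For every μ ≥ 1, ∫_{x ∈ D_μ} ∏_{i < j} (p(x) i − p(x) j)² dx = Q̄_μ / Real.Gamma (μ²), i.e. the normalization constant of the Schmidt-coefficient density P(p) = N · ∏_{i<j}(p_i − p_j)² on the probability simplex is N = Real.Gamma (μ²) / Q̄_μ. -/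
/-! Expanding the squared Vandermonde determinant as a double sum over pairs of permutations
reduces the integral to the Dirichlet moments `∫_D ∏ pᵢ ^ kᵢ = ∏ kᵢ! / (μ - 1 + ∑ kᵢ)!`, computed
by integrating out one coordinate at a time against a Beta integral. For `kᵢ = σ i + τ i` the
denominator is always `(μ² - 1)! = Γ(μ²)`, and the signed sum of the numerators is `μ!` times the
Hankel determinant `det ((i + j)!)`. That determinant is `∏ (k!)²` because
`(i + j)! = ∑ₖ i! C(i, k) · j! C(j, k)` factors the Hankel matrix as `L Lᵀ` with `L` lower
triangular with diagonal `i!`. -/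

open scoped BigOperators

/-- `Q̄_μ = μ! ∏_{k=0}^{μ-1} (k!)²`. -/
noncomputable def Qbar (μ : ℕ) : ℝ :=
  (μ.factorial : ℝ) * ∏ k ∈ Finset.range μ, ((k.factorial : ℝ)) ^ 2

/-- The simplex domain `D_μ`. -/
def Dset (μ : ℕ) : Set (Fin (μ - 1) → ℝ) :=
  {x | (∀ i, 0 < x i) ∧ ∑ i, x i < 1}

/-- Extension of `x` to the probability simplex in `Fin μ → ℝ`. -/
noncomputable def pExt (μ : ℕ) (x : Fin (μ - 1) → ℝ) : Fin μ → ℝ :=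
  fun i => if h : (i : ℕ) < μ - 1 then x ⟨i, h⟩ else 1 - ∑ j, x j

open MeasureTheory Finset Matrix Equiv
open scoped Nat

section Algebra

variable {R : Type*} [CommRing R]

lemma Matrix.det_sq_eq_sum_sum_sign {m : Type*} [Fintype m] [DecidableEq m] (M : Matrix m m R) :
    M.det ^ 2 = ∑ σ : Perm m, ∑ τ : Perm m,
      ((Perm.sign σ : ℤ) : R) * ((Perm.sign τ : ℤ) : R) * ∏ i, M (σ i) i * M (τ i) i := by
  rw [det_apply', sq, sum_mul_sum]
  simp_rw [mul_mul_mul_comm _ (∏ i, _), ← prod_mul_distrib]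

lemma prod_prod_Ioi_sq_sub_eq_sum_sum_sign {m : ℕ} (v : Fin m → R) :
    ∏ i, ∏ j ∈ Ioi i, (v i - v j) ^ 2 = ∑ σ : Perm (Fin m), ∑ τ : Perm (Fin m),
      ((Perm.sign σ : ℤ) : R) * ((Perm.sign τ : ℤ) : R) * ∏ i, v i ^ ((σ i : ℕ) + τ i) := by
  have hsq : ∏ i, ∏ j ∈ Ioi i, (v i - v j) ^ 2 = (vandermonde v)ᵀ.det ^ 2 := by
    rw [det_transpose, det_vandermonde, ← prod_pow]
    refine prod_congr rfl fun i _ => ?_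
    rw [← prod_pow]
    exact prod_congr rfl fun j _ => by ring
  simp only [hsq, Matrix.det_sq_eq_sum_sum_sign, transpose_apply, vandermonde_apply, pow_add]

lemma sum_sum_sign_mul_prod_eq_factorial_mul_det {m : Type*} [Fintype m] [DecidableEq m]
    (B : Matrix m m R) :
    ∑ σ : Perm m, ∑ τ : Perm m, ((Perm.sign σ : ℤ) : R) * ((Perm.sign τ : ℤ) : R)
      * ∏ i, B (σ i) (τ i) = (Fintype.card m)! * B.det := by
  have hinner : ∀ σ : Perm m, ∑ τ : Perm m,
      ((Perm.sign σ : ℤ) : R) * ((Perm.sign τ : ℤ) : R) * ∏ i, B (σ i) (τ i) = B.det := by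
    intro σ
    rw [← det_transpose, det_apply', ← Equiv.sum_comp (Equiv.mulRight σ)]
    refine sum_congr rfl fun π _ => ?_
    have hsign : Perm.sign σ * Perm.sign (π * σ) = Perm.sign π := by
      rw [Perm.sign_mul, mul_left_comm, Int.units_mul_self, mul_one]
    rw [coe_mulRight, ← Int.cast_mul, ← Units.val_mul, hsign,
      Fintype.prod_equiv σ (fun i => B (σ i) ((π * σ) i)) (fun j => Bᵀ (π j) j) (fun i => rfl)]
  simp_rw [hinner, sum_const, card_univ, Fintype.card_perm, nsmul_eq_mul]

lemma choose_add_eq_sum_choose_mul_choose (i j N : ℕ) (hj : j < N) :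
    (i + j).choose j = ∑ k ∈ range N, i.choose k * j.choose k := by
  rw [Nat.add_choose_eq,
    Finset.Nat.sum_antidiagonal_eq_sum_range_succ (fun a b => i.choose a * j.choose b),
    ← Finset.sum_range_add_sum_Ico _ hj, sum_eq_zero (s := Ico _ _), add_zero]
  · refine sum_congr rfl fun k hk => ?_
    rw [Nat.choose_symm (Nat.lt_succ_iff.mp (mem_range.mp hk))]
  · intro k hk
    rw [Nat.choose_eq_zero_of_lt (mem_Ico.mp hk).1, mul_zero]

lemma factorial_add_eq_sum_factorial_mul_choose {m : ℕ} (i j : Fin m) :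
    ((i : ℕ) + j)! = ∑ k : Fin m, (i ! * (i : ℕ).choose k) * (j ! * (j : ℕ).choose k) := by
  rw [← Nat.add_choose_mul_factorial_mul_factorial, choose_add_eq_sum_choose_mul_choose _ _ m j.2,
    ← Fin.sum_univ_eq_sum_range, sum_mul, sum_mul]
  exact sum_congr rfl fun k _ => by ring

lemma det_of_factorial_add {m : ℕ} :
    (Matrix.of fun i j : Fin m => ((((i : ℕ) + j)! : ℕ) : R)).det
      = ∏ k : Fin m, ((k ! : ℕ) : R) ^ 2 := by
  set L : Matrix (Fin m) (Fin m) R := Matrix.of fun i k => ((i ! * (i : ℕ).choose k : ℕ) : R)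
  have hLLt : Matrix.of (fun i j : Fin m => ((((i : ℕ) + j)! : ℕ) : R)) = L * Lᵀ := by
    ext i j
    simp only [L, mul_apply, transpose_apply, of_apply,
      factorial_add_eq_sum_factorial_mul_choose i j]
    push_cast; rfl
  have hL : L.IsLowerTriangular := fun i k hik => by
    simp [L, Nat.choose_eq_zero_of_lt (show (i : ℕ) < k from hik)]
  rw [hLLt, det_mul, det_transpose, det_of_isLowerTriangular L hL, ← prod_mul_distrib]
  simp [L, sq]

end Algebra

lemma integral_pow_mul_one_sub_pow (p q : ℕ) :
    ∫ t in (0 : ℝ)..1, t ^ p * (1 - t) ^ q = (p ! * q ! : ℝ) / (p + q + 1)! := by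
  induction q generalizing p with
  | zero =>
    simp only [pow_zero, mul_one, integral_pow, Nat.factorial_succ]
    push_cast
    field_simp
    norm_num
  | succ q ih =>
    have hsplit : ∀ t : ℝ,
        t ^ p * (1 - t) ^ (q + 1) = t ^ p * (1 - t) ^ q - t ^ (p + 1) * (1 - t) ^ q :=
      fun t => by ring
    simp_rw [hsplit]
    rw [intervalIntegral.integral_sub ((by fun_prop : Continuous _).intervalIntegrable _ _)
      ((by fun_prop : Continuous _).intervalIntegrable _ _), ih, ih,
      show p + 1 + q + 1 = p + (q + 1) + 1 by ring, Nat.factorial_succ (p + (q + 1)),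
      show p + (q + 1) = p + q + 1 by ring, Nat.factorial_succ p, Nat.factorial_succ q]
    push_cast
    field_simp
    ring

lemma integral_pow_mul_sub_pow (p q : ℕ) (c : ℝ) :
    ∫ t in (0 : ℝ)..c, t ^ p * (c - t) ^ q = (p ! * q ! : ℝ) / (p + q + 1)! * c ^ (p + q + 1) := by
  have hscale : ∀ t : ℝ, (c * t) ^ p * (c - c * t) ^ q = c ^ (p + q) * (t ^ p * (1 - t) ^ q) :=
    fun t => by rw [← mul_one_sub, mul_pow, mul_pow, pow_add]; ring
  have hsubst := intervalIntegral.smul_integral_comp_mul_left (fun t => t ^ p * (c - t) ^ q) c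
    (a := 0) (b := 1)
  rw [mul_zero, mul_one] at hsubst
  rw [← hsubst, smul_eq_mul]
  simp_rw [hscale]
  rw [intervalIntegral.integral_const_mul, integral_pow_mul_one_sub_pow]
  ring

lemma setLIntegral_Ioo_pow_mul_sub_pow (p q : ℕ) {c : ℝ} (hc : 0 < c) :
    ∫⁻ t in Set.Ioo 0 c, ENNReal.ofReal (t ^ p * (c - t) ^ q)
      = ENNReal.ofReal ((p ! * q ! : ℝ) / (p + q + 1)! * c ^ (p + q + 1)) := by
  rw [← integral_pow_mul_sub_pow, intervalIntegral.integral_of_le hc.le,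
    ← Measure.restrict_congr_set Ioo_ae_eq_Ioc,
    ofReal_integral_eq_lintegral_ofReal
      (((by fun_prop : Continuous _).integrableOn_Icc).mono_set Set.Ioo_subset_Icc_self)]
  filter_upwards [ae_restrict_mem measurableSet_Ioo] with t ht
  exact mul_nonneg (pow_nonneg ht.1.le _) (pow_nonneg (sub_nonneg.mpr ht.2.le) _)

lemma lintegral_fin_cons {α : Type*} [MeasureSpace α] [SigmaFinite (volume : Measure α)] {n : ℕ}
    {f : (Fin (n + 1) → α) → ENNReal} (hf : Measurable f) :
    ∫⁻ x, f x = ∫⁻ t, ∫⁻ y, f (Fin.cons t y) := by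
  rw [← ((volume_preserving_piFinSuccAbove (fun _ => α) 0).symm).lintegral_comp hf,
    Measure.volume_eq_prod]
  refine (lintegral_prod (fun z => f ((MeasurableEquiv.piFinSuccAbove (fun _ => α) 0).symm z))
    (hf.comp (MeasurableEquiv.measurable _)).aemeasurable).trans ?_
  simp only [MeasurableEquiv.piFinSuccAbove, Fin.zero_succAbove, Fin.insertNthEquiv_zero,
    MeasurableEquiv.symm_mk, Equiv.symm_symm, MeasurableEquiv.coe_mk]
  rfl

def openSimplex (n : ℕ) (c : ℝ) : Set (Fin n → ℝ) :=
  {x | (∀ i, 0 < x i) ∧ ∑ i, x i < c}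

lemma measurableSet_openSimplex (n : ℕ) (c : ℝ) : MeasurableSet (openSimplex n c) := by
  rw [openSimplex, Set.ofPred_and, Set.ofPred_forall]
  exact (MeasurableSet.iInter fun i =>
      measurableSet_lt measurable_const (measurable_pi_apply i)).inter
    (measurableSet_lt (by fun_prop) measurable_const)

lemma cons_mem_openSimplex_iff {n : ℕ} {c t : ℝ} {y : Fin n → ℝ} :
    (Fin.cons t y : Fin (n + 1) → ℝ) ∈ openSimplex (n + 1) c
      ↔ 0 < t ∧ y ∈ openSimplex n (c - t) := by
  simp only [openSimplex, Set.mem_ofPred_eq, Fin.forall_fin_succ, Fin.cons_zero, Fin.cons_succ,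
    Fin.sum_cons, lt_sub_iff_add_lt', and_assoc]

lemma pos_of_mem_openSimplex {n : ℕ} {c : ℝ} {x : Fin n → ℝ} (hx : x ∈ openSimplex n c) : 0 < c :=
  (sum_nonneg fun i _ => (hx.1 i).le).trans_lt hx.2

lemma indicator_openSimplex_cons_of_notMem {n : ℕ} {c t : ℝ} (ht : t ∉ Set.Ioo 0 c)
    (f : (Fin (n + 1) → ℝ) → ENNReal) (y : Fin n → ℝ) :
    (openSimplex (n + 1) c).indicator f (Fin.cons t y) = 0 := by
  refine Set.indicator_of_notMem (fun hy => ht ?_) f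
  obtain ⟨ht0, hy⟩ := cons_mem_openSimplex_iff.1 hy
  exact ⟨ht0, sub_pos.1 (pos_of_mem_openSimplex hy)⟩

lemma indicator_openSimplex_cons_of_pos {n : ℕ} (a : Fin (n + 1) → ℕ) (b : ℕ) {c t : ℝ}
    (ht : 0 < t) (y : Fin n → ℝ) :
    (openSimplex (n + 1) c).indicator
        (fun x => ENNReal.ofReal ((∏ i, x i ^ a i) * (c - ∑ i, x i) ^ b)) (Fin.cons t y)
      = ENNReal.ofReal (t ^ a 0) * (openSimplex n (c - t)).indicator
          (fun y => ENNReal.ofReal ((∏ j, y j ^ a j.succ) * (c - t - ∑ j, y j) ^ b)) y := by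
  classical
  simp only [Set.indicator_apply, cons_mem_openSimplex_iff, ht, true_and]
  split_ifs
  · rw [← ENNReal.ofReal_mul (pow_nonneg ht.le _), Fin.prod_univ_succ, Fin.sum_cons]
    simp only [Fin.cons_zero, Fin.cons_succ, sub_sub, mul_assoc]
  · rw [mul_zero]

theorem lintegral_openSimplex_monomial (n : ℕ) (a : Fin n → ℕ) (b : ℕ) {c : ℝ} (hc : 0 < c) :
    ∫⁻ x in openSimplex n c, ENNReal.ofReal ((∏ i, x i ^ a i) * (c - ∑ i, x i) ^ b)
      = ENNReal.ofReal ((∏ i, ((a i)! : ℝ)) * b ! / (n + ∑ i, a i + b)!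
          * c ^ (n + ∑ i, a i + b)) := by
  induction n generalizing c with
  | zero =>
    have huniv : openSimplex 0 c = Set.univ := by simp [openSimplex, hc]
    simp [huniv, (Nat.factorial_pos b).ne', volume_pi]
  | succ n ih =>
    set M := n + ∑ j : Fin n, a j.succ + b
    set K : ℝ := (∏ j : Fin n, ((a j.succ)! : ℝ)) * b ! / (M ! : ℝ)
    have hK : 0 ≤ K := by positivity
    have hfiber : ∀ t, ∫⁻ y, (openSimplex (n + 1) c).indicator
        (fun x => ENNReal.ofReal ((∏ i, x i ^ a i) * (c - ∑ i, x i) ^ b)) (Fin.cons t y)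
        = (Set.Ioo 0 c).indicator
            (fun t => ENNReal.ofReal K * ENNReal.ofReal (t ^ a 0 * (c - t) ^ M)) t := by
      intro t
      by_cases ht : t ∈ Set.Ioo 0 c
      · simp_rw [Set.indicator_of_mem ht, indicator_openSimplex_cons_of_pos a b ht.1]
        rw [lintegral_const_mul' _ _ ENNReal.ofReal_ne_top,
          lintegral_indicator (measurableSet_openSimplex _ _), ih _ (sub_pos.2 ht.2),
          ← ENNReal.ofReal_mul (pow_nonneg ht.1.le _), ← ENNReal.ofReal_mul hK]
        congr 1
        simp only [K, M]
        ring
      · simp_rw [Set.indicator_of_notMem ht, indicator_openSimplex_cons_of_notMem ht,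
          lintegral_zero]
    have hdeg : a 0 + M + 1 = n + 1 + ∑ i, a i + b := by
      rw [Fin.sum_univ_succ]; omega
    rw [← lintegral_indicator (measurableSet_openSimplex _ _),
      lintegral_fin_cons ((by fun_prop : Measurable _).indicator (measurableSet_openSimplex _ _)),
      lintegral_congr hfiber, lintegral_indicator measurableSet_Ioo,
      lintegral_const_mul' _ _ ENNReal.ofReal_ne_top, setLIntegral_Ioo_pow_mul_sub_pow _ _ hc,
      ← ENNReal.ofReal_mul hK, hdeg, Fin.prod_univ_succ]
    congr 1
    field_simp
    exact div_mul_cancel₀ _ (Nat.cast_ne_zero.2 M.factorial_ne_zero)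

lemma pExt_succ (n : ℕ) (x : Fin n → ℝ) : pExt (n + 1) x = Fin.snoc x (1 - ∑ j, x j) := by
  ext i
  refine Fin.lastCases ?_ (fun j => ?_) i <;> simp [pExt]

lemma prod_pExt_pow (n : ℕ) (x : Fin n → ℝ) (k : Fin (n + 1) → ℕ) :
    ∏ i, pExt (n + 1) x i ^ k i = (∏ j, x j ^ k j.castSucc) * (1 - ∑ j, x j) ^ k (Fin.last n) := by
  simp [pExt_succ, Fin.prod_univ_castSucc]

lemma lintegral_Dset_prod_pExt_pow (n : ℕ) (k : Fin (n + 1) → ℕ) :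
    ∫⁻ x in Dset (n + 1), ENNReal.ofReal (∏ i, pExt (n + 1) x i ^ k i)
      = ENNReal.ofReal ((∏ i, ((k i)! : ℝ)) / (n + ∑ i, k i)!) := by
  have hdeg : n + ∑ j : Fin n, k j.castSucc + k (Fin.last n) = n + ∑ i, k i := by
    rw [Fin.sum_univ_castSucc]; ring
  simp_rw [prod_pExt_pow]
  -- `Dset (n + 1)` is `openSimplex n 1` once `n + 1 - 1` reduces to `n`
  change ∫⁻ x in openSimplex n 1, _ = _
  rw [lintegral_openSimplex_monomial _ _ _ one_pos, one_pow, mul_one, hdeg,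
    ← Fin.prod_univ_castSucc fun i => ((k i)! : ℝ)]

lemma measurableSet_Dset (n : ℕ) : MeasurableSet (Dset (n + 1)) := measurableSet_openSimplex n 1

lemma continuous_prod_pExt_pow (n : ℕ) (k : Fin (n + 1) → ℕ) :
    Continuous fun x : Fin n → ℝ => ∏ i, pExt (n + 1) x i ^ k i := by
  simp_rw [prod_pExt_pow]
  fun_prop

lemma ae_nonneg_prod_pExt_pow (n : ℕ) (k : Fin (n + 1) → ℕ) :
    0 ≤ᵐ[volume.restrict (Dset (n + 1))] fun x => ∏ i, pExt (n + 1) x i ^ k i := by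
  filter_upwards [ae_restrict_mem (measurableSet_Dset n)] with x hx
  rw [Pi.zero_apply, prod_pExt_pow]
  exact mul_nonneg (prod_nonneg fun j _ => pow_nonneg (hx.1 j).le _)
    (pow_nonneg (sub_nonneg.2 hx.2.le) _)

lemma integrableOn_prod_pExt_pow (n : ℕ) (k : Fin (n + 1) → ℕ) :
    IntegrableOn (fun x => ∏ i, pExt (n + 1) x i ^ k i) (Dset (n + 1)) := by
  refine (lintegral_ofReal_ne_top_iff_integrable
    (continuous_prod_pExt_pow n k).aestronglyMeasurable (ae_nonneg_prod_pExt_pow n k)).1 ?_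
  exact (lintegral_Dset_prod_pExt_pow n k).trans_ne ENNReal.ofReal_ne_top

lemma setIntegral_prod_pExt_pow (n : ℕ) (k : Fin (n + 1) → ℕ) :
    ∫ x in Dset (n + 1), ∏ i, pExt (n + 1) x i ^ k i = (∏ i, ((k i)! : ℝ)) / (n + ∑ i, k i)! := by
  rw [integral_eq_lintegral_of_nonneg_ae (ae_nonneg_prod_pExt_pow n k)
    (continuous_prod_pExt_pow n k).aestronglyMeasurable, lintegral_Dset_prod_pExt_pow,
    ENNReal.toReal_ofReal (by positivity)]

lemma add_sum_coe_perm_add_coe_perm {n : ℕ} (σ τ : Perm (Fin (n + 1))) :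
    n + ∑ i, ((σ i : ℕ) + τ i) = n * (n + 2) := by
  have hgauss : (∑ i : Fin (n + 1), (i : ℕ)) * 2 = (n + 1) * n := by
    rw [Fin.sum_univ_eq_sum_range (fun i => i), sum_range_id_mul_two, Nat.add_sub_cancel]
  rw [sum_add_distrib, Equiv.sum_comp σ (fun i => (i : ℕ)), Equiv.sum_comp τ (fun i => (i : ℕ)),
    show n * (n + 2) = n + (n + 1) * n by ring, ← hgauss]
  ring

lemma setIntegral_Dset_vandermonde_sq (n : ℕ) :
    ∫ x in Dset (n + 1), ∏ i, ∏ j ∈ Ioi i, (pExt (n + 1) x i - pExt (n + 1) x j) ^ 2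
      = (n + 1)! * (∏ k : Fin (n + 1), ((k ! : ℕ) : ℝ) ^ 2) / (n * (n + 2))! := by
  have hmoment : ∀ σ τ : Perm (Fin (n + 1)),
      ∫ x in Dset (n + 1), ∏ i, pExt (n + 1) x i ^ ((σ i : ℕ) + τ i)
        = (∏ i, ((((σ i : ℕ) + τ i)! : ℕ) : ℝ)) / (n * (n + 2))! := fun σ τ => by
    rw [setIntegral_prod_pExt_pow, add_sum_coe_perm_add_coe_perm]
  have hintegrable : ∀ σ τ : Perm (Fin (n + 1)), IntegrableOn
      (fun x => ((Perm.sign σ : ℤ) : ℝ) * ((Perm.sign τ : ℤ) : ℝ)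
        * ∏ i, pExt (n + 1) x i ^ ((σ i : ℕ) + τ i)) (Dset (n + 1)) :=
    fun σ τ => (integrableOn_prod_pExt_pow n _).const_mul _
  have hperm := sum_sum_sign_mul_prod_eq_factorial_mul_det
    (Matrix.of fun i j : Fin (n + 1) => ((((i : ℕ) + j)! : ℕ) : ℝ))
  simp only [of_apply, det_of_factorial_add, Fintype.card_fin] at hperm
  simp_rw [prod_prod_Ioi_sq_sub_eq_sum_sum_sign]
  rw [integral_finsetSum _ fun σ _ => integrable_finsetSum _ fun τ _ => hintegrable σ τ, ← hperm,
    sum_div]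
  refine sum_congr rfl fun σ _ => ?_
  rw [integral_finsetSum _ fun τ _ => hintegrable σ τ, sum_div]
  simp_rw [integral_const_mul, hmoment, mul_div_assoc]

theorem schmidt_density_normalization (μ : ℕ) (hμ : 1 ≤ μ) :
    ∫ x in Dset μ, ∏ i, ∏ j ∈ Finset.Ioi i, (pExt μ x i - pExt μ x j) ^ 2
      = Qbar μ / Real.Gamma ((μ : ℝ) ^ 2) := by
  obtain ⟨n, rfl⟩ := Nat.exists_eq_add_of_le' hμ
  have hGamma : Real.Gamma (((n + 1 : ℕ) : ℝ) ^ 2) = (n * (n + 2))! := by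
    rw [← Real.Gamma_nat_eq_factorial]
    push_cast
    ring_nf
  rw [setIntegral_Dset_vandermonde_sq, hGamma, Qbar,
    Fin.prod_univ_eq_prod_range (fun k => ((k ! : ℕ) : ℝ) ^ 2)]
end
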